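/- Let n be a positive integer, let x, y_1, …, y_n be vectors in H, and let p > 1 and q satisfy 1/p + 1/q = 1. Then ∑_{i=1}^n |(x, y_i)|^2 ≤ ‖x‖ · (∑_{i=1}^n |(x, y_i)|^p (∑_{j=1}^n |(y_i, y_j)|))^{1/(2p)} · (∑_{i=1}^n |(x, y_i)|^q (∑_{j=1}^n |(y_i, y_j)|))^{1/(2q)}. -/

import Mathlib

/-!
With `c i = ⟪x, y i⟫` and `z = ∑ i, conj (c i) • y i` we have `⟪x, z⟫ = ∑ i, |c i| ^ 2`, so
Cauchy–Schwarz gives `∑ i, |c i| ^ 2 ≤ ‖x‖ ‖z‖`. Expanding `‖z‖ ^ 2` bounds it by the double sum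
`∑ i j, |c i| |c j| |⟪y i, y j⟫|`, and Hölder's inequality on pairs `(i, j)`, weighted by the
symmetric kernel `|⟪y i, y j⟫|`, bounds that by the product of the `p`- and `q`-sums.
-/

open Finset RCLike
open scoped InnerProductSpace ComplexConjugate

theorem Real.inner_le_weighted_Lp_mul_Lq {ι : Type*} (s : Finset ι) {w f g : ι → ℝ} {p q : ℝ}
    (hpq : p.HolderConjugate q) (hw : ∀ i ∈ s, 0 ≤ w i) (hf : ∀ i ∈ s, 0 ≤ f i)
    (hg : ∀ i ∈ s, 0 ≤ g i) :
    ∑ i ∈ s, w i * f i * g i ≤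
      (∑ i ∈ s, w i * f i ^ p) ^ (1 / p) * (∑ i ∈ s, w i * g i ^ q) ^ (1 / q) := by
  have key := Real.inner_le_Lp_mul_Lq_of_nonneg s hpq
    (f := fun i => w i ^ (1 / p) * f i) (g := fun i => w i ^ (1 / q) * g i)
    (fun i hi => mul_nonneg (Real.rpow_nonneg (hw i hi) _) (hf i hi))
    (fun i hi => mul_nonneg (Real.rpow_nonneg (hw i hi) _) (hg i hi))
  have root_rpow {r : ℝ} (hr : 0 < r) {i : ι} (hi : i ∈ s) {a : ℝ} (ha : 0 ≤ a) :
      (w i ^ (1 / r) * a) ^ r = w i * a ^ r := by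
    rw [Real.mul_rpow (Real.rpow_nonneg (hw i hi) _) ha, ← Real.rpow_mul (hw i hi),
      one_div_mul_cancel hr.ne', Real.rpow_one]
  refine le_of_eq_of_le (sum_congr rfl fun i hi => ?_) (key.trans_eq ?_)
  · rw [mul_mul_mul_comm, ← Real.rpow_add' (hw i hi) (by simp [hpq.inv_add_inv_eq_one]),
      one_div, one_div, hpq.inv_add_inv_eq_one, Real.rpow_one, mul_assoc]
  · rw [sum_congr rfl fun i hi => root_rpow hpq.pos hi (hf i hi),
      sum_congr rfl fun i hi => root_rpow hpq.symm.pos hi (hg i hi)]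

theorem sum_mul_mul_le_Lp_mul_Lq {ι : Type*} [Fintype ι] {a b : ι → ℝ} {t : ι → ι → ℝ} {p q : ℝ}
    (hpq : p.HolderConjugate q) (ha : ∀ i, 0 ≤ a i) (hb : ∀ j, 0 ≤ b j) (ht : ∀ i j, 0 ≤ t i j) :
    ∑ i, ∑ j, a i * b j * t i j ≤
      (∑ i, a i ^ p * ∑ j, t i j) ^ (1 / p) * (∑ j, b j ^ q * ∑ i, t i j) ^ (1 / q) := by
  have key := Real.inner_le_weighted_Lp_mul_Lq univ hpq (w := fun ij : ι × ι => t ij.1 ij.2)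
    (f := fun ij => a ij.1) (g := fun ij => b ij.2) (fun _ _ => ht _ _) (fun _ _ => ha _)
    (fun _ _ => hb _)
  simp only [← univ_product_univ, sum_product] at key
  rw [sum_comm (f := fun i j => t i j * b j ^ q)] at key
  convert key using 3
  · ring
  · exact sum_congr rfl fun i _ => by rw [mul_sum]; exact sum_congr rfl fun j _ => mul_comm _ _
  · exact sum_congr rfl fun j _ => by rw [mul_sum]; exact sum_congr rfl fun i _ => mul_comm _ _

section
variable {𝕜 E ι : Type*} [RCLike 𝕜] [NormedAddCommGroup E] [InnerProductSpace 𝕜 E] [Fintype ι]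

theorem inner_sum_conj_inner_smul (x : E) (y : ι → E) :
    ⟪x, ∑ i, conj ⟪x, y i⟫_𝕜 • y i⟫_𝕜 = ((∑ i, ‖⟪x, y i⟫_𝕜‖ ^ 2 : ℝ) : 𝕜) := by
  simp only [inner_sum, inner_smul_right, RCLike.conj_mul, ofReal_sum, ofReal_pow]

theorem sum_norm_inner_sq_le_norm_mul_norm (x : E) (y : ι → E) :
    ∑ i, ‖⟪x, y i⟫_𝕜‖ ^ 2 ≤ ‖x‖ * ‖∑ i, conj ⟪x, y i⟫_𝕜 • y i‖ := by
  have h := norm_inner_le_norm (𝕜 := 𝕜) x (∑ i, conj ⟪x, y i⟫_𝕜 • y i)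
  rwa [inner_sum_conj_inner_smul, norm_ofReal, abs_of_nonneg (by positivity)] at h

theorem norm_sum_smul_sq_le (a : ι → 𝕜) (y : ι → E) :
    ‖∑ i, a i • y i‖ ^ 2 ≤ ∑ i, ∑ j, ‖a i‖ * ‖a j‖ * ‖⟪y i, y j⟫_𝕜‖ := by
  calc ‖∑ i, a i • y i‖ ^ 2 = ‖⟪∑ i, a i • y i, ∑ j, a j • y j⟫_𝕜‖ := by
        rw [inner_self_eq_norm_sq_to_K, norm_pow, norm_ofReal, abs_norm]
    _ = ‖∑ i, ∑ j, conj (a i) * (a j * ⟪y i, y j⟫_𝕜)‖ := by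
        rw [sum_inner]
        simp only [inner_smul_left, inner_sum, inner_smul_right, mul_left_comm (a _)]
    _ ≤ ∑ i, ∑ j, ‖conj (a i) * (a j * ⟪y i, y j⟫_𝕜)‖ :=
        (norm_sum_le _ _).trans (sum_le_sum fun i _ => norm_sum_le _ _)
    _ = ∑ i, ∑ j, ‖a i‖ * ‖a j‖ * ‖⟪y i, y j⟫_𝕜‖ := by
        simp only [norm_mul, RCLike.norm_conj, mul_assoc]

end

theorem stmt_16_general {H : Type*} [NormedAddCommGroup H] [InnerProductSpace ℂ H]
    {n : ℕ} (x : H) (y : Fin n → H) (p q : ℝ) (hp : 1 < p) (hpq : 1 / p + 1 / q = 1) :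
    (∑ i, (norm ((inner ℂ x (y i) : ℂ))) ^ 2) ≤ ‖x‖ * (∑ i, (norm ((inner ℂ x (y i) : ℂ))) ^ p * (∑ j, norm ((inner ℂ (y i) (y j) : ℂ)))) ^ (1 / (2 * p)) * (∑ i, (norm ((inner ℂ x (y i) : ℂ))) ^ q * (∑ j, norm ((inner ℂ (y i) (y j) : ℂ)))) ^ (1 / (2 * q)) := by
  have hpq' : p.HolderConjugate q :=
    Real.holderConjugate_iff.mpr ⟨hp, by simpa only [one_div] using hpq⟩
  set A := ∑ i, ‖⟪x, y i⟫_ℂ‖ ^ p * ∑ j, ‖⟪y i, y j⟫_ℂ‖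
  set B := ∑ i, ‖⟪x, y i⟫_ℂ‖ ^ q * ∑ j, ‖⟪y i, y j⟫_ℂ‖
  set z := ∑ i, conj ⟪x, y i⟫_ℂ • y i
  have hz_sq : ‖z‖ ^ 2 ≤ A ^ (1 / p) * B ^ (1 / q) := by
    refine (norm_sum_smul_sq_le _ y).trans ?_
    have holder := sum_mul_mul_le_Lp_mul_Lq hpq' (a := fun i => ‖⟪x, y i⟫_ℂ‖)
      (b := fun i => ‖⟪x, y i⟫_ℂ‖) (t := fun i j => ‖⟪y i, y j⟫_ℂ‖) (fun _ => norm_nonneg _)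
      (fun _ => norm_nonneg _) (fun _ _ => norm_nonneg _)
    have col_eq_row (j : Fin n) : ∑ i, ‖⟪y i, y j⟫_ℂ‖ = ∑ i, ‖⟪y j, y i⟫_ℂ‖ :=
      sum_congr rfl fun i _ => norm_inner_symm _ _
    simpa only [RCLike.norm_conj, col_eq_row] using holder
  have hz : ‖z‖ ≤ A ^ (1 / (2 * p)) * B ^ (1 / (2 * q)) := by
    have hA : 0 ≤ A := by positivity
    have hB : 0 ≤ B := by positivity
    calc ‖z‖ = √(‖z‖ ^ 2) := (Real.sqrt_sq (norm_nonneg z)).symm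
      _ ≤ √(A ^ (1 / p) * B ^ (1 / q)) := Real.sqrt_le_sqrt hz_sq
      _ = A ^ (1 / (2 * p)) * B ^ (1 / (2 * q)) := by
        rw [Real.sqrt_eq_rpow, Real.mul_rpow (by positivity) (by positivity),
          ← Real.rpow_mul hA, ← Real.rpow_mul hB]
        congr 2 <;> field_simp
  calc ∑ i, ‖⟪x, y i⟫_ℂ‖ ^ 2 ≤ ‖x‖ * ‖z‖ := sum_norm_inner_sq_le_norm_mul_norm x y
    _ ≤ ‖x‖ * (A ^ (1 / (2 * p)) * B ^ (1 / (2 * q))) := by gcongr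
    _ = _ := (mul_assoc _ _ _).symm

theorem stmt_16 {H : Type*} [NormedAddCommGroup H] [InnerProductSpace ℂ H]
    {n : ℕ} (hn : 0 < n) (x : H) (y : Fin n → H) (p q : ℝ) (hp : 1 < p) (hpq : 1 / p + 1 / q = 1) :
    (∑ i, (norm ((inner ℂ x (y i) : ℂ))) ^ 2) ≤ ‖x‖ * (∑ i, (norm ((inner ℂ x (y i) : ℂ))) ^ p * (∑ j, norm ((inner ℂ (y i) (y j) : ℂ)))) ^ (1 / (2 * p)) * (∑ i, (norm ((inner ℂ x (y i) : ℂ))) ^ q * (∑ j, norm ((inner ℂ (y i) (y j) : ℂ)))) ^ (1 / (2 * q)) :=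
  stmt_16_general x y p q hp hpq
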